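/- arXiv:1307.6433 — 3 statements merged into one kernel-verified Lean document; each statement's English description precedes it below -/
import Mathlib

section
/- Let X be a set, T : X → X a map, N ≥ 1 an integer, and φ : X → ℝ a function together with real numbers m, M such that m ≤ φ(x) ≤ M for all x ∈ X. Define φ̃ := (1/N)·S_N(φ). Then for every integer n ≥ 1 and every x ∈ X, |S_n(φ̃)(x) − S_n(φ)(x)| ≤ (N−1)·(M − m). -/
/-!
Summing `φ̃ = (1/N) S_N φ` along `n` steps of an orbit is the same as averaging the window sums
`S_n φ (Tʲ x)` over `0 ≤ j < N`. Each window differs from `S_n φ x` by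
`S_n φ (Tʲ x) - S_n φ x = S_j φ (Tⁿ x) - S_j φ x`, since both sides of
`S_{n+j} = S_n + S_j ∘ Tⁿ = S_j + S_n ∘ Tʲ` agree; and two Birkhoff sums of length `j ≤ N - 1`
of a function with values in `[m, M]` differ by at most `j (M - m)`.
-/

open Finset Function

section AddCommMonoid

variable {α M : Type*} [AddCommMonoid M]

theorem birkhoffSum_birkhoffSum_comm (f : α → α) (g : α → M) (m n : ℕ) (x : α) :
    birkhoffSum f (birkhoffSum f g m) n x = birkhoffSum f (birkhoffSum f g n) m x := by
  simp only [birkhoffSum, ← iterate_add_apply]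
  rw [sum_comm]
  simp only [add_comm]

theorem birkhoffSum_birkhoffAverage (R : Type*) [DivisionSemiring R] [Module R M]
    (f : α → α) (g : α → M) (m n : ℕ) (x : α) :
    birkhoffSum f (birkhoffAverage R f g m) n x = birkhoffAverage R f (birkhoffSum f g n) m x := by
  simp only [birkhoffAverage, birkhoffSum, ← smul_sum]
  congr 1
  exact birkhoffSum_birkhoffSum_comm f g m n x

end AddCommMonoid

theorem birkhoffSum_iterate_sub_birkhoffSum {α G : Type*} [AddCommGroup G]
    (f : α → α) (g : α → G) (n k : ℕ) (x : α) :
    birkhoffSum f g n (f^[k] x) - birkhoffSum f g n x =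
      birkhoffSum f g k (f^[n] x) - birkhoffSum f g k x := by
  have hkn := birkhoffSum_add f g k n x
  have hnk := birkhoffSum_add f g n k x
  rw [add_comm k n, hnk] at hkn
  rw [sub_eq_sub_iff_add_eq_add, add_comm, ← hkn, add_comm]

section Real

variable {α : Type*} {f : α → α} {g : α → ℝ}

theorem abs_birkhoffSum_sub_birkhoffSum_le {m M : ℝ} (hm : ∀ x, m ≤ g x) (hM : ∀ x, g x ≤ M)
    (n : ℕ) (x y : α) : |birkhoffSum f g n x - birkhoffSum f g n y| ≤ n * (M - m) := by
  have upper (z : α) : birkhoffSum f g n z ≤ n * M := by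
    simpa [birkhoffSum] using sum_le_card_nsmul (range n) _ M fun k _ ↦ hM (f^[k] z)
  have lower (z : α) : n * m ≤ birkhoffSum f g n z := by
    simpa [birkhoffSum] using card_nsmul_le_sum (range n) _ m fun k _ ↦ hm (f^[k] z)
  rw [abs_sub_le_iff]
  constructor <;> linarith [upper x, upper y, lower x, lower y]

theorem abs_birkhoffAverage_sub_le {N : ℕ} {x : α} {c C : ℝ} (hN : N ≠ 0)
    (h : ∀ k < N, |g (f^[k] x) - c| ≤ C) : |birkhoffAverage ℝ f g N x - c| ≤ C := by
  have hN' : (0 : ℝ) < N := by positivity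
  have hdiff : birkhoffAverage ℝ f g N x - c = (N : ℝ)⁻¹ * ∑ k ∈ range N, (g (f^[k] x) - c) := by
    rw [birkhoffAverage, smul_eq_mul, sum_sub_distrib, sum_const, card_range, nsmul_eq_mul,
      mul_sub, inv_mul_cancel_left₀ hN'.ne', birkhoffSum]
  have hbound : |∑ k ∈ range N, (g (f^[k] x) - c)| ≤ N * C := by
    simpa using (abs_sum_le_sum_abs _ _).trans
      (sum_le_card_nsmul (range N) _ C fun k hk ↦ h k (mem_range.mp hk))
  rwa [hdiff, abs_mul, abs_inv, abs_of_pos hN', inv_mul_le_iff₀ hN']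

end Real

/-- With `m ≤ φ ≤ M` on `X` and `φ̃ := (1/N)·S_N(φ)`, for every `n ≥ 1`
and `x ∈ X` we have `|S_n(φ̃)(x) − S_n(φ)(x)| ≤ (N−1)·(M − m)`. -/
theorem stmt1 {X : Type*} (T : X → X) (N : ℕ) (hN : 1 ≤ N)
    (φ : X → ℝ) (m M : ℝ) (hm : ∀ x, m ≤ φ x) (hM : ∀ x, φ x ≤ M)
    (φt : X → ℝ)
    (hφt : ∀ x, φt x = (1 / (N : ℝ)) * ∑ i ∈ Finset.range N, φ (T^[i] x)) :
    ∀ n : ℕ, 1 ≤ n → ∀ x,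
      |(∑ i ∈ Finset.range n, φt (T^[i] x)) - ∑ i ∈ Finset.range n, φ (T^[i] x)|
        ≤ ((N : ℝ) - 1) * (M - m) := by
  intro n _ x
  have hφt_avg : φt = birkhoffAverage ℝ T φ N := by
    funext y
    rw [hφt, one_div]
    rfl
  change |birkhoffSum T φt n x - birkhoffSum T φ n x| ≤ _
  rw [hφt_avg, birkhoffSum_birkhoffAverage]
  refine abs_birkhoffAverage_sub_le (by omega) fun k hk ↦ ?_
  rw [birkhoffSum_iterate_sub_birkhoffSum]
  calc |birkhoffSum T φ k (T^[n] x) - birkhoffSum T φ k x| ≤ k * (M - m) :=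
        abs_birkhoffSum_sub_birkhoffSum_le hm hM k _ _
    _ ≤ ((N : ℝ) - 1) * (M - m) := by
        have hkN : (k : ℝ) ≤ N - 1 := by
          rw [le_sub_iff_add_le]
          exact_mod_cast hk
        exact mul_le_mul_of_nonneg_right hkN (sub_nonneg.mpr ((hm x).trans (hM x)))
end

section
/- Let a < b be real numbers, put I = [a,b], and let f : I → I be a continuous map that is topologically exact, in the sense that for every closed subinterval J ⊆ I containing more than one point there exists an integer m ≥ 1 with fᵐ(J) = I. Then for every integer n ≥ 1 and every interval U ⊆ I on which the n-th iterate fⁿ is strictly monotone, there is at most one point p ∈ U with fⁿ(p) = p; that is, any two fixed points of fⁿ lying in U coincide. -/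
/-!
Let `g = fⁿ` be strictly increasing on `[p, q] ⊆ U` with `g p = p` and `g q = q` (a decreasing
`g` cannot fix two points). Then `g` maps `[p, q)` into itself, so every iterate of `g` keeps the
left half `J = [p, (p + q) / 2]` inside `[p, q)`. Exactness gives `fᵐ(J) = I`, which forces
`f(I) = I`, hence `gᵐ(J) = f^{nm}(J) = I ∋ b ≥ q`: a contradiction.
-/

open Set Function

variable {α : Type*}

theorem Set.image_eq_of_image_iterate_eq {f : α → α} {s J : Set α} {m : ℕ}
    (hf : MapsTo f s s) (hJ : J ⊆ s) (hm : 1 ≤ m) (h : f^[m] '' J = s) : f '' s = s := by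
  refine hf.image_subset.antisymm ?_
  obtain ⟨k, rfl⟩ := Nat.exists_eq_add_of_le' hm
  calc s = f '' (f^[k] '' J) := by rw [← image_comp, ← iterate_succ', h]
    _ ⊆ f '' s := image_mono ((hf.iterate k).mono_left hJ).image_subset

theorem Set.image_iterate_eq_of_le {f : α → α} {s J : Set α} {m k : ℕ} (hs : f '' s = s)
    (hJ : f^[m] '' J = s) (hmk : m ≤ k) : f^[k] '' J = s := by
  obtain ⟨d, rfl⟩ := Nat.exists_eq_add_of_le' hmk
  rw [iterate_add, image_comp, hJ, image_iterate_eq, iterate_fixed hs]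

section LinearOrder

variable [LinearOrder α] {g : α → α} {p q : α}

theorem StrictMonoOn.mapsTo_Ico_of_fixed (h : StrictMonoOn g (Icc p q)) (hp : g p = p)
    (hq : g q = q) : MapsTo g (Ico p q) (Ico p q) := fun _ hx ↦
  ⟨hp ▸ h.monotoneOn (left_mem_Icc.2 (hx.1.trans hx.2.le)) (Ico_subset_Icc_self hx) hx.1,
    hq ▸ h (Ico_subset_Icc_self hx) (right_mem_Icc.2 (hx.1.trans hx.2.le)) hx.2⟩

theorem StrictAntiOn.eq_of_fixed {U : Set α} (h : StrictAntiOn g U) (hp : p ∈ U) (hq : q ∈ U)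
    (hfp : g p = p) (hfq : g q = q) : p = q := by
  rcases lt_trichotomy p q with hpq | hpq | hpq
  · exact absurd (hfp ▸ hfq ▸ h hp hq hpq) hpq.not_gt
  · exact hpq
  · exact absurd (hfp ▸ hfq ▸ h hq hp hpq) hpq.not_gt

end LinearOrder

theorem not_lt_of_fixed_of_strictMonoOn_of_exact {a b : ℝ} {f : ℝ → ℝ}
    (hmaps : MapsTo f (Icc a b) (Icc a b))
    (hexact : ∀ J : Set ℝ, J ⊆ Icc a b → IsClosed J → J.OrdConnected → J.Nontrivial →
      ∃ m : ℕ, 1 ≤ m ∧ f^[m] '' J = Icc a b)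
    {n : ℕ} (hn : 1 ≤ n) {U : Set ℝ} (hUsub : U ⊆ Icc a b) (hUint : U.OrdConnected)
    (hmono : StrictMonoOn (f^[n]) U) {p q : ℝ} (hp : p ∈ U) (hq : q ∈ U)
    (hfp : f^[n] p = p) (hfq : f^[n] q = q) : ¬ p < q := by
  intro hpq
  have hpqU : Icc p q ⊆ U := hUint.out hp hq
  have hg : MapsTo (f^[n]) (Ico p q) (Ico p q) := (hmono.mono hpqU).mapsTo_Ico_of_fixed hfp hfq
  have hpc : p < (p + q) / 2 := by linarith
  have hJ : Icc p ((p + q) / 2) ⊆ Ico p q := Icc_subset_Ico_right (by linarith)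
  have hJI : Icc p ((p + q) / 2) ⊆ Icc a b :=
    hJ.trans (Ico_subset_Icc_self.trans (hpqU.trans hUsub))
  obtain ⟨m, hm, hfm⟩ := hexact _ hJI isClosed_Icc ordConnected_Icc
    ⟨p, left_mem_Icc.2 hpc.le, _, right_mem_Icc.2 hpc.le, hpc.ne⟩
  have hfI : f '' Icc a b = Icc a b := image_eq_of_image_iterate_eq hmaps hJI hm hfm
  have hgm : (f^[n])^[m] '' Icc p ((p + q) / 2) = Icc a b := by
    rw [← iterate_mul]
    exact image_iterate_eq_of_le hfI hfm (Nat.le_mul_of_pos_left m hn)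
  have hqb : q ≤ b := (hUsub hq).2
  have hab : a ≤ b := (hUsub hp).1.trans (hpq.le.trans hqb)
  have hb : b ∈ Ico p q :=
    ((hg.iterate m).mono_left hJ).image_subset (hgm ▸ right_mem_Icc.2 hab)
  exact absurd hb.2 hqb.not_gt

theorem stmt6_general (a b : ℝ) (f : ℝ → ℝ)
    (hmaps : Set.MapsTo f (Set.Icc a b) (Set.Icc a b))
    (hexact : ∀ J : Set ℝ, J ⊆ Set.Icc a b → IsClosed J → J.OrdConnected → J.Nontrivial →
      ∃ m : ℕ, 1 ≤ m ∧ f^[m] '' J = Set.Icc a b)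
    (n : ℕ) (hn : 1 ≤ n) (U : Set ℝ) (hUsub : U ⊆ Set.Icc a b) (hUint : U.OrdConnected)
    (hmono : StrictMonoOn (f^[n]) U ∨ StrictAntiOn (f^[n]) U) :
    ∀ p ∈ U, ∀ q ∈ U, f^[n] p = p → f^[n] q = q → p = q := by
  intro p hp q hq hfp hfq
  rcases hmono with hmono | hanti
  · have key {x y : ℝ} := not_lt_of_fixed_of_strictMonoOn_of_exact (p := x) (q := y)
      hmaps hexact hn hUsub hUint hmono
    exact le_antisymm (not_lt.1 (key hq hp hfq hfp)) (not_lt.1 (key hp hq hfp hfq))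
  · exact hanti.eq_of_fixed hp hq hfp hfq

/-- Let `I = [a,b]` with `a < b` and let `f : I → I` be continuous and
topologically exact: for every closed subinterval `J ⊆ I` with more than one point there
is `m ≥ 1` with `fᵐ(J) = I`. Then for every `n ≥ 1` and every interval `U ⊆ I` on which
`fⁿ` is strictly monotone, any two fixed points of `fⁿ` in `U` coincide. -/
theorem stmt6 (a b : ℝ) (hab : a < b) (f : ℝ → ℝ)
    (hmaps : Set.MapsTo f (Set.Icc a b) (Set.Icc a b))
    (hcont : ContinuousOn f (Set.Icc a b))
    (hexact : ∀ J : Set ℝ, J ⊆ Set.Icc a b → IsClosed J → J.OrdConnected → J.Nontrivial →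
      ∃ m : ℕ, 1 ≤ m ∧ f^[m] '' J = Set.Icc a b)
    (n : ℕ) (hn : 1 ≤ n) (U : Set ℝ) (hUsub : U ⊆ Set.Icc a b) (hUint : U.OrdConnected)
    (hmono : StrictMonoOn (f^[n]) U ∨ StrictAntiOn (f^[n]) U) :
    ∀ p ∈ U, ∀ q ∈ U, f^[n] p = p → f^[n] q = q → p = q :=
  stmt6_general a b f hmaps hexact n hn U hUsub hUint hmono
end

section
/- Let X be a compact metric space equipped with its Borel σ-algebra, and let f : X → X be a continuous map such that f⁻¹({x}) is finite for every x ∈ X and such that X is the union of countably many pairwise disjoint Borel sets X₁, X₂, … on each of which f is injective. Let μ be a Borel probability measure on X, let φ : X → ℝ be bounded and Borel measurable, let p ∈ ℝ, and set g := exp(p − φ). Assume μ is g-conformal for f, i.e. μ(f(A)) = ∫_A g dμ for every Borel set A ⊆ X on which f is injective. Then for every Borel measurable function h : X → [0,∞], ∫_X ( ∑_{y ∈ f⁻¹({x})} e^{φ(y) − p}·h(y) ) dμ(x) = ∫_X h dμ. -/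
/-!
Split `X` into the injectivity branches `Xs i`. On a branch `A`, the sum of `F` over the
preimages lying in `A` is `F ∘ (f|_A)⁻¹` extended by zero, which is Borel by Lusin–Souslin.
Conformality says exactly that `f` pushes `μ|_A` with density `G` forward to `μ|_{f(A)}`, so
this branch sum integrates to `∫_A G F dμ`. Summing over the branches gives
`∫ (∑_{f y = x} F y) dμ(x) = ∫ G F dμ`, and `G F = h` for `G = e^{p-φ}`, `F = e^{φ-p} h`.
-/

open MeasureTheory Set Function
open scoped ENNReal

section FiberSum

variable {α β : Type*}

noncomputable def fiberSumOn (f : α → β) (A : Set α) (F : α → ℝ≥0∞) (x : β) : ℝ≥0∞ :=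
  ∑' y : ↥(f ⁻¹' {x} ∩ A), F y

theorem ENNReal.tsum_subtype_eq_tsum_inter {ι : Type*} {A : ι → Set α}
    (hdisj : Pairwise (Disjoint on A)) (hcover : ⋃ i, A i = univ) (s : Set α) (F : α → ℝ≥0∞) :
    ∑' y : s, F y = ∑' i, ∑' y : ↥(s ∩ A i), F y := by
  have hs : s = ⋃ i, s ∩ A i := by rw [← inter_iUnion, hcover, inter_univ]
  rw [tsum_congr_set_coe F hs]
  exact ENNReal.tsum_biUnion fun i _ j _ hij =>
    (hdisj hij).mono inter_subset_right inter_subset_right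

theorem tsum_preimage_singleton_eq_tsum_fiberSumOn {ι : Type*} {A : ι → Set α}
    (hdisj : Pairwise (Disjoint on A)) (hcover : ⋃ i, A i = univ) (f : α → β) (F : α → ℝ≥0∞)
    (x : β) : ∑' y : ↥(f ⁻¹' {x}), F y = ∑' i, fiberSumOn f (A i) F x :=
  ENNReal.tsum_subtype_eq_tsum_inter hdisj hcover _ F

variable {f : α → β} {A : Set α}

theorem Set.InjOn.fiberSumOn_apply_image (hinj : InjOn f A) (F : α → ℝ≥0∞) {z : α}
    (hz : z ∈ A) : fiberSumOn f A F (f z) = F z := by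
  have : f ⁻¹' {f z} ∩ A = {z} :=
    Subset.antisymm (fun w hw => hinj hw.2 hz hw.1) (singleton_subset_iff.2 ⟨rfl, hz⟩)
  rw [fiberSumOn, this, tsum_singleton]

theorem fiberSumOn_eq_zero_of_notMem_image (F : α → ℝ≥0∞) {x : β} (hx : x ∉ f '' A) :
    fiberSumOn f A F x = 0 := by
  have : f ⁻¹' {x} ∩ A = ∅ := eq_empty_of_forall_notMem fun y hy => hx ⟨y, hy.2, hy.1⟩
  rw [fiberSumOn, this, tsum_empty]

theorem Set.InjOn.fiberSumOn_eq_extend (hinj : InjOn f A) (F : α → ℝ≥0∞) :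
    fiberSumOn f A F = extend (A.domRestrict f) (fun z => F z) 0 := by
  funext x
  by_cases hx : x ∈ f '' A
  · obtain ⟨z, hz, rfl⟩ := hx
    exact (hinj.fiberSumOn_apply_image F hz).trans
      ((injOn_iff_injective.1 hinj).extend_apply (fun z : A => F z) 0 ⟨z, hz⟩).symm
  · rw [fiberSumOn_eq_zero_of_notMem_image F hx, extend_apply' _ _ _ ?_, Pi.zero_apply]
    rintro ⟨⟨z, hz⟩, rfl⟩
    exact hx ⟨z, hz, rfl⟩

theorem measurable_fiberSumOn [MeasurableSpace α] [StandardBorelSpace α] [MeasurableSpace β]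
    [MeasurableSpace.CountablySeparated β] (hf : Measurable f) (hA : MeasurableSet A)
    (hinj : InjOn f A) {F : α → ℝ≥0∞} (hF : Measurable F) :
    Measurable (fiberSumOn f A F) := by
  have := hA.standardBorel
  rw [hinj.fiberSumOn_eq_extend]
  exact ((hf.comp measurable_subtype_coe).measurableEmbedding (injOn_iff_injective.1 hinj))
    |>.measurable_extend (hF.comp measurable_subtype_coe) measurable_const

end FiberSum

section Conformal

variable {α : Type*} [MeasurableSpace α] {μ : Measure α} {f : α → α} {A : Set α}
  {G : α → ℝ≥0∞}

theorem map_withDensity_restrict_eq_restrict_image (hf : Measurable f) (hA : MeasurableSet A)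
    (hinj : InjOn f A)
    (hconf : ∀ B, MeasurableSet B → InjOn f B → μ (f '' B) = ∫⁻ x in B, G x ∂μ) :
    ((μ.restrict A).withDensity G).map f = μ.restrict (f '' A) := by
  ext s hs
  have hB : MeasurableSet (f ⁻¹' s ∩ A) := (hf hs).inter hA
  rw [Measure.map_apply hf hs, Measure.restrict_apply hs, withDensity_apply _ (hf hs),
    Measure.restrict_restrict (hf hs), ← hconf _ hB (hinj.mono inter_subset_right),
    image_preimage_inter]

theorem lintegral_fiberSumOn [StandardBorelSpace α] (hf : Measurable f) (hA : MeasurableSet A)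
    (hinj : InjOn f A)
    (hconf : ∀ B, MeasurableSet B → InjOn f B → μ (f '' B) = ∫⁻ x in B, G x ∂μ)
    (hG : Measurable G) {F : α → ℝ≥0∞} (hF : Measurable F) :
    ∫⁻ x, fiberSumOn f A F x ∂μ = ∫⁻ z in A, G z * F z ∂μ := by
  have hS := measurable_fiberSumOn hf hA hinj hF
  have hSf : Measurable fun z => fiberSumOn f A F (f z) := hS.comp hf
  have hsupp : ∫⁻ x, fiberSumOn f A F x ∂μ = ∫⁻ x in f '' A, fiberSumOn f A F x ∂μ := by
    refine (setLIntegral_eq_of_support_subset fun x hx => ?_).symm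
    by_contra hxA
    exact hx (fiberSumOn_eq_zero_of_notMem_image F hxA)
  rw [hsupp, ← map_withDensity_restrict_eq_restrict_image hf hA hinj hconf,
    lintegral_map hS hf, lintegral_withDensity_eq_lintegral_mul _ hG hSf]
  exact setLIntegral_congr_fun hA fun z hz => by
    rw [Pi.mul_apply, hinj.fiberSumOn_apply_image F hz]

theorem lintegral_tsum_preimage_singleton [StandardBorelSpace α] {ι : Type*} [Countable ι]
    {A : ι → Set α} (hA : ∀ i, MeasurableSet (A i)) (hdisj : Pairwise (Disjoint on A))
    (hcover : ⋃ i, A i = univ) (hinj : ∀ i, InjOn f (A i)) (hf : Measurable f)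
    (hconf : ∀ B, MeasurableSet B → InjOn f B → μ (f '' B) = ∫⁻ x in B, G x ∂μ)
    (hG : Measurable G) {F : α → ℝ≥0∞} (hF : Measurable F) :
    ∫⁻ x, ∑' y : ↥(f ⁻¹' {x}), F y ∂μ = ∫⁻ z, G z * F z ∂μ := calc
  _ = ∑' i, ∫⁻ x, fiberSumOn f (A i) F x ∂μ := by
      simp_rw [tsum_preimage_singleton_eq_tsum_fiberSumOn hdisj hcover]
      exact lintegral_tsum fun i => (measurable_fiberSumOn hf (hA i) (hinj i) hF).aemeasurable
  _ = ∑' i, ∫⁻ z in A i, G z * F z ∂μ := by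
      simp_rw [lintegral_fiberSumOn hf (hA _) (hinj _) hconf hG hF]
  _ = ∫⁻ z, G z * F z ∂μ := by
      rw [← lintegral_iUnion hA hdisj, hcover, Measure.restrict_univ]

end Conformal

theorem stmt9_general {X : Type*} [MetricSpace X] [CompactSpace X] [MeasurableSpace X]
    [BorelSpace X]
    (f : X → X) (hf : Continuous f)
    (Xs : ℕ → Set X) (hXmeas : ∀ i, MeasurableSet (Xs i))
    (hXdisj : Pairwise (Function.onFun Disjoint Xs))
    (hXunion : ⋃ i, Xs i = Set.univ)
    (hXinj : ∀ i, Set.InjOn f (Xs i))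
    (μ : Measure X)
    (φ : X → ℝ) (hφmeas : Measurable φ)
    (p : ℝ) (g : X → ℝ) (hg : ∀ x, g x = Real.exp (p - φ x))
    (hconf : ∀ A : Set X, MeasurableSet A → Set.InjOn f A →
      μ (f '' A) = ∫⁻ x in A, ENNReal.ofReal (g x) ∂μ)
    (h : X → ℝ≥0∞) (hh : Measurable h) :
    ∫⁻ x, (∑' y : (f ⁻¹' {x}), ENNReal.ofReal (Real.exp (φ y - p)) * h y) ∂μ
      = ∫⁻ x, h x ∂μ := by
  have hG : Measurable fun x => ENNReal.ofReal (g x) := by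
    simp_rw [hg]
    fun_prop
  rw [lintegral_tsum_preimage_singleton hXmeas hXdisj hXunion hXinj hf.measurable hconf hG
    (F := fun y => ENNReal.ofReal (Real.exp (φ y - p)) * h y) (by fun_prop)]
  refine lintegral_congr fun x => ?_
  rw [← mul_assoc, hg, ← ENNReal.ofReal_mul (Real.exp_pos _).le, ← Real.exp_add,
    sub_add_sub_cancel', sub_self, Real.exp_zero, ENNReal.ofReal_one, one_mul]

/-- Let `X` be a compact metric space with its Borel σ-algebra, `f : X → X`
continuous with finite fibers, and suppose `X` is a countable disjoint union of Borel
sets on each of which `f` is injective. Let `μ` be a Borel probability measure, `φ`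
bounded Borel measurable, `p ∈ ℝ`, `g := exp(p − φ)`, and assume `μ` is `g`-conformal:
`μ(f(A)) = ∫_A g dμ` for every Borel `A` on which `f` is injective. Then for every Borel
measurable `h : X → [0,∞]`,
`∫ (∑_{y ∈ f⁻¹({x})} e^{φ(y)−p}·h(y)) dμ(x) = ∫ h dμ`. -/
theorem stmt9 {X : Type*} [MetricSpace X] [CompactSpace X] [MeasurableSpace X]
    [BorelSpace X]
    (f : X → X) (hf : Continuous f) (hfib : ∀ x, (f ⁻¹' {x}).Finite)
    (Xs : ℕ → Set X) (hXmeas : ∀ i, MeasurableSet (Xs i))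
    (hXdisj : Pairwise (Function.onFun Disjoint Xs))
    (hXunion : ⋃ i, Xs i = Set.univ)
    (hXinj : ∀ i, Set.InjOn f (Xs i))
    (μ : Measure X) [IsProbabilityMeasure μ]
    (φ : X → ℝ) (hφmeas : Measurable φ) (hφbdd : ∃ Cb : ℝ, ∀ x, |φ x| ≤ Cb)
    (p : ℝ) (g : X → ℝ) (hg : ∀ x, g x = Real.exp (p - φ x))
    (hconf : ∀ A : Set X, MeasurableSet A → Set.InjOn f A →
      μ (f '' A) = ∫⁻ x in A, ENNReal.ofReal (g x) ∂μ)
    (h : X → ℝ≥0∞) (hh : Measurable h) :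
    ∫⁻ x, (∑' y : (f ⁻¹' {x}), ENNReal.ofReal (Real.exp (φ y - p)) * h y) ∂μ
      = ∫⁻ x, h x ∂μ :=
  stmt9_general f hf Xs hXmeas hXdisj hXunion hXinj μ φ hφmeas p g hg hconf h hh
end
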